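/- Main theorem, common-vertex case: let λ be a bilinking form under which K_V (|V| = m ≥ 5) and K_W (|W| = n ≥ 5) are weakly linked, with p ∈ V common to all triangles of V linking W and q ∈ W common to all triangles of W linking V. Then there exist ℓ with 2 ≤ ℓ ≤ min{m,n} − 1, a partition {X₀,…,X_{ℓ−1}} of V − {p}, and a partition {Y₀,…,Y_{ℓ−1}} of W − {q}, such that: (i) a triangle (p,x,y) of V links W iff x and y lie in different parts X_i; (ii) a triangle (q,u,v) of W links V iff u and v lie in different parts Y_i; (iii) for x_j ∈ X_j, x_k ∈ X_k with j < k, the triangle (p,x_j,x_k) links W in the star qO_{jk}I_{jk} with O_{jk} = Y_j ∪ ⋯ ∪ Y_{k−1} and I_{jk} its complement in W − {q}; and (iv) for y_j ∈ Y_j, y_k ∈ Y_k with j < k, the triangle (q,y_j,y_k) links V in the star pP_{jk}J_{jk} with J_{jk} = X_{j+1} ∪ ⋯ ∪ X_k and P_{jk} its complement in V − {p}. -/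

import Mathlib

open scoped Classical

section Defs

variable {V : Type*} {W : Type*}

/-- A map `V³ → ℤ` alternating in its arguments. -/
def IsAlt (f : V → V → V → ℤ) : Prop :=
  (∀ a b c, f b a c = - f a b c) ∧ (∀ a b c, f a c b = - f a b c)

/-- The simplicial cocycle identity. -/
def IsCocycle (f : V → V → V → ℤ) : Prop :=
  ∀ a b c d, f b c d - f a c d + f a b d - f a b c = 0

/-- A linking function on `V`. -/
def IsLinkingFun (f : V → V → V → ℤ) : Prop := IsAlt f ∧ IsCocycle f

/-- A cycle in the complete graph on `V`: a list of at least 3 distinct vertices. -/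
def IsCycle (C : List V) : Prop := C.Nodup ∧ 3 ≤ C.length

/-- The value of `f` on a cycle, via the standard triangulation
`f(C) = ∑_{i=1}^{k-2} f(v₀, vᵢ, vᵢ₊₁)`. -/
def cycleVal (f : V → V → V → ℤ) : List V → ℤ
  | [] => 0
  | v :: rest => ∑ i ∈ Finset.range (rest.length - 1),
      f v (rest.getD i v) (rest.getD (i + 1) v)

/-- `f` is weak: `|f(C)| ≤ 1` for every cycle `C`. -/
def IsWeak (f : V → V → V → ℤ) : Prop :=
  ∀ C : List V, IsCycle C → |cycleVal f C| ≤ 1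

/-- `f` is nontrivial: `f(C) ≠ 0` for some cycle `C`. -/
def IsNontrivial (f : V → V → V → ℤ) : Prop :=
  ∃ C : List V, IsCycle C ∧ cycleVal f C ≠ 0

noncomputable def starEdge (O I : Set V) (x y : V) : ℤ :=
  (if x ∈ O ∧ y ∈ I then 1 else 0) - (if x ∈ I ∧ y ∈ O then 1 else 0)

/-- The star function `pOI`: the alternating function with value `1` on `(p,q,r)`
for `q ∈ O`, `r ∈ I`, and value `0` on triples not of this form up to reorientation. -/
noncomputable def starFun (p : V) (O I : Set V) (a b c : V) : ℤ :=
  (if a = p then starEdge O I b c else 0)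
    - (if b = p then starEdge O I a c else 0)
    + (if c = p then starEdge O I a b else 0)

/-- `({p}, O, I)` is an ordered partition of `V` into three nonempty parts. -/
def IsStarPartition (p : V) (O I : Set V) : Prop :=
  O.Nonempty ∧ I.Nonempty ∧ p ∉ O ∧ p ∉ I ∧ Disjoint O I ∧
    insert p (O ∪ I) = (Set.univ : Set V)

/-- A bilinking form between `V` and `W`. -/
def IsBilinking (lam : V → V → V → W → W → W → ℤ) : Prop :=
  (∀ u v w, IsLinkingFun (fun a b c => lam a b c u v w)) ∧
  (∀ a b c, IsLinkingFun (lam a b c))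

/-- The value of a bilinking form on a pair of cycles. -/
def biCycleVal (lam : V → V → V → W → W → W → ℤ) (C : List V) (D : List W) : ℤ :=
  cycleVal (fun a b c => cycleVal (lam a b c) D) C

/-- `K_V` and `K_W` are weakly linked under `lam`. -/
def WeaklyLinked (lam : V → V → V → W → W → W → ℤ) : Prop :=
  (∀ (C : List V) (D : List W), IsCycle C → IsCycle D → |biCycleVal lam C D| ≤ 1) ∧
  ∃ (C : List V) (D : List W), IsCycle C ∧ IsCycle D ∧ biCycleVal lam C D ≠ 0

end Defs

/-! On triangles through `p` and `q`, `λ` restricts to `g x y u v = λ(p,x,y,q,u,v)` with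
`x, y ≠ p`, `u, v ≠ q`; since `λ` vanishes on triangles avoiding `p` or `q`, the cone
formula recovers `λ` from `g`. The cocycle identities make `g` additive in `(x,y)` and in `(u,v)`,
and weak linking bounds it by `1`. For a fixed `x₀`, additivity and the bound force
`g x x₀ u v = [v ∈ S x] - [u ∈ S x]` for some set `S x`, and the bound on `g x y` forces the
sets `S x` to form a chain. Numbering the chain gives `s : V - p → Fin ℓ` and
`t : W - q → Fin ℓ` with `u ∈ S x ↔ t u < s x`; the parts `X i`, `Y i` are the fibres of `s`
and `t`, and (i)–(iv) are read off from the resulting formula for `g`. -/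

open Finset Function

section Alternating

variable {V : Type*} {f : V → V → V → ℤ}

theorem IsAlt.apply_self₁₂ (hf : IsAlt f) (a c : V) : f a a c = 0 := by
  have := hf.1 a a c; omega

theorem IsAlt.apply_self₂₃ (hf : IsAlt f) (a b : V) : f a b b = 0 := by
  have := hf.2 a b b; omega

theorem IsAlt.apply_self₁₃ (hf : IsAlt f) (a b : V) : f a b a = 0 := by
  have := hf.2 a b a; have := hf.apply_self₁₂ a b; omega

theorem IsAlt.pairwise_ne_of_apply_ne_zero (hf : IsAlt f) {a b c : V} (h : f a b c ≠ 0) :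
    a ≠ b ∧ a ≠ c ∧ b ≠ c := by
  refine ⟨?_, ?_, ?_⟩ <;> rintro rfl
  · exact h (hf.apply_self₁₂ a c)
  · exact h (hf.apply_self₁₃ a b)
  · exact h (hf.apply_self₂₃ a b)

theorem isCycle_triple {a b c : V} (hab : a ≠ b) (hac : a ≠ c) (hbc : b ≠ c) :
    IsCycle [a, b, c] :=
  ⟨by simp [hab, hac, hbc], by simp⟩

theorem cycleVal_triple (f : V → V → V → ℤ) (a b c : V) :
    cycleVal f [a, b, c] = f a b c := by
  simp [cycleVal]

theorem cycleVal_zero (C : List V) : cycleVal (fun _ _ _ => (0 : ℤ)) C = 0 := by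
  cases C <;> simp [cycleVal]

theorem IsAlt.exists_cycleVal_ne_zero_iff (hf : IsAlt f) :
    (∃ C, IsCycle C ∧ cycleVal f C ≠ 0) ↔ ∃ a b c, f a b c ≠ 0 := by
  constructor
  · rintro ⟨C, -, hC⟩
    by_contra! h
    exact hC (by simpa [show f = fun _ _ _ => 0 from funext₃ h] using cycleVal_zero C)
  · rintro ⟨a, b, c, h⟩
    obtain ⟨hab, hac, hbc⟩ := hf.pairwise_ne_of_apply_ne_zero h
    exact ⟨[a, b, c], isCycle_triple hab hac hbc, by rwa [cycleVal_triple]⟩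

theorem IsAlt.apply_eq_zero_of_cycleVal_eq_zero (hf : IsAlt f)
    (h : ∀ C, IsCycle C → cycleVal f C = 0) (a b c : V) : f a b c = 0 := by
  by_contra hne
  obtain ⟨C, hC, hC0⟩ := hf.exists_cycleVal_ne_zero_iff.2 ⟨a, b, c, hne⟩
  exact hC0 (h C hC)

theorem IsLinkingFun.apex_add (hf : IsLinkingFun f) {p x y z : V} (h : f x y z = 0) :
    f p x y + f p y z = f p x z := by
  have := hf.2 x p y z
  have := hf.1.1 p x z
  have := hf.1.1 p x y
  omega

def VanishesAwayFrom (f : V → V → V → ℤ) (p : V) : Prop :=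
  ∀ a b c, a ≠ p → b ≠ p → c ≠ p → f a b c = 0

theorem IsAlt.apply_eq_cone (hf : IsAlt f) {p : V} (h0 : VanishesAwayFrom f p) (a b c : V) :
    f a b c = (if a = p then f p b c else 0) - (if b = p then f p a c else 0)
      + (if c = p then f p a b else 0) := by
  by_cases ha : a = p
  · subst ha
    simp [hf.apply_self₁₂]
  by_cases hb : b = p
  · subst hb
    simp [ha, hf.1 b a c, hf.apply_self₁₃]
  by_cases hc : c = p
  · subst hc
    simp [ha, hb, hf.2 a c b, hf.1 c a b]
  simp [ha, hb, hc, h0 a b c ha hb hc]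

theorem IsAlt.apex_eq_of_ne (hf : IsAlt f) {p : V} {e : V → V → ℤ} (hl : ∀ b, e p b = 0)
    (hr : ∀ a, e a p = 0) (h : ∀ a b, a ≠ p → b ≠ p → f p a b = e a b) (a b : V) :
    f p a b = e a b := by
  by_cases ha : a = p
  · subst ha; rw [hf.apply_self₁₂, hl]
  by_cases hb : b = p
  · subst hb; rw [hf.apply_self₁₃, hr]
  exact h a b ha hb

theorem IsAlt.eq_starFun (hf : IsAlt f) {p : V} (h0 : VanishesAwayFrom f p) {O I : Set V}
    (hpO : p ∉ O) (hpI : p ∉ I)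
    (h : ∀ a b, a ≠ p → b ≠ p → f p a b = starEdge O I a b) :
    f = starFun p O I := by
  have hapex := hf.apex_eq_of_ne (by simp [starEdge, hpO, hpI]) (by simp [starEdge, hpO, hpI]) h
  funext a b c
  rw [hf.apply_eq_cone h0, starFun]
  simp only [hapex]

theorem IsAlt.exists_apex_ne_zero_iff (hf : IsAlt f) {p : V} (h0 : VanishesAwayFrom f p) :
    (∃ a b c, f a b c ≠ 0) ↔ ∃ x y : {x // x ≠ p}, f p x y ≠ 0 := by
  refine ⟨fun ⟨a, b, c, h⟩ => ?_, fun ⟨x, y, h⟩ => ⟨p, x, y, h⟩⟩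
  by_contra! hzero
  have hapex := hf.apex_eq_of_ne (e := 0) (fun _ => rfl) (fun _ => rfl)
    fun x y hx hy => hzero ⟨x, hx⟩ ⟨y, hy⟩
  simp [hf.apply_eq_cone h0 a b c, hapex] at h

theorem IsAlt.exists_cycleVal_ne_zero_iff_apex (hf : IsAlt f) {p : V}
    (h0 : VanishesAwayFrom f p) :
    (∃ C, IsCycle C ∧ cycleVal f C ≠ 0) ↔ ∃ x y : {x // x ≠ p}, f p x y ≠ 0 :=
  hf.exists_cycleVal_ne_zero_iff.trans (hf.exists_apex_ne_zero_iff h0)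

end Alternating

section Bilinking

variable {V W : Type*} {lam : V → V → V → W → W → W → ℤ}

theorem biCycleVal_triple (lam : V → V → V → W → W → W → ℤ) (a b c : V) (u v w : W) :
    biCycleVal lam [a, b, c] [u, v, w] = lam a b c u v w := by
  simp [biCycleVal, cycleVal_triple]

theorem WeaklyLinked.abs_le_one (hbl : IsBilinking lam) (hwl : WeaklyLinked lam)
    (a b c : V) (u v w : W) : |lam a b c u v w| ≤ 1 := by
  by_cases h : lam a b c u v w = 0
  · simp [h]
  obtain ⟨hab, hac, hbc⟩ := (hbl.1 u v w).1.pairwise_ne_of_apply_ne_zero h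
  obtain ⟨huv, huw, hvw⟩ := (hbl.2 a b c).1.pairwise_ne_of_apply_ne_zero h
  simpa [biCycleVal_triple] using
    hwl.1 _ _ (isCycle_triple hab hac hbc) (isCycle_triple huv huw hvw)

theorem WeaklyLinked.exists_ne_zero (hwl : WeaklyLinked lam) :
    ∃ a b c u v w, lam a b c u v w ≠ 0 := by
  obtain ⟨C, D, -, -, h⟩ := hwl.2
  by_contra! h0
  have : lam = fun _ _ _ _ _ _ => 0 := by funext a b c u v w; exact h0 a b c u v w
  simp [biCycleVal, this, cycleVal_zero] at h

theorem IsBilinking.vanishesAwayFrom_left (hbl : IsBilinking lam) {p : V}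
    (hp : ∀ a b c : V, p ∉ ({a, b, c} : Set V) →
      ∀ D : List W, IsCycle D → cycleVal (lam a b c) D = 0) (u v w : W) :
    VanishesAwayFrom (fun a b c => lam a b c u v w) p := fun a b c ha hb hc =>
  (hbl.2 a b c).1.apply_eq_zero_of_cycleVal_eq_zero
    (hp a b c (by simp [ha.symm, hb.symm, hc.symm])) u v w

theorem IsBilinking.vanishesAwayFrom_right (hbl : IsBilinking lam) {q : W}
    (hq : ∀ u v w : W, q ∉ ({u, v, w} : Set W) →
      ∀ C : List V, IsCycle C → cycleVal (fun a b c => lam a b c u v w) C = 0) (a b c : V) :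
    VanishesAwayFrom (lam a b c) q := fun u v w hu hv hw =>
  (hbl.1 u v w).1.apply_eq_zero_of_cycleVal_eq_zero
    (hq u v w (by simp [hu.symm, hv.symm, hw.symm])) a b c

def apexForm (lam : V → V → V → W → W → W → ℤ) (p : V) (q : W)
    (x y : {x // x ≠ p}) (u v : {u // u ≠ q}) : ℤ :=
  lam p x y q u v

variable {p : V} {q : W}

theorem apexForm_add_left (hbl : IsBilinking lam)
    (hzp : ∀ u v w, VanishesAwayFrom (fun a b c => lam a b c u v w) p) (x y z u v) :
    apexForm lam p q x y u v + apexForm lam p q y z u v = apexForm lam p q x z u v :=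
  (hbl.1 q u v).apex_add (hzp q u v x y z x.2 y.2 z.2)

theorem apexForm_add_right (hbl : IsBilinking lam)
    (hzq : ∀ a b c, VanishesAwayFrom (lam a b c) q) (x y u v w) :
    apexForm lam p q x y u v + apexForm lam p q x y v w = apexForm lam p q x y u w :=
  (hbl.2 p x y).apex_add (hzq p x y u v w u.2 v.2 w.2)

theorem apexForm_abs_le_one (hbl : IsBilinking lam) (hwl : WeaklyLinked lam) (x y u v) :
    |apexForm lam p q x y u v| ≤ 1 :=
  hwl.abs_le_one hbl _ _ _ _ _ _

theorem apexForm_exists_ne_zero (hbl : IsBilinking lam) (hwl : WeaklyLinked lam)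
    (hzp : ∀ u v w, VanishesAwayFrom (fun a b c => lam a b c u v w) p)
    (hzq : ∀ a b c, VanishesAwayFrom (lam a b c) q) :
    ∃ x y u v, apexForm lam p q x y u v ≠ 0 := by
  obtain ⟨a, b, c, u, v, w, h⟩ := hwl.exists_ne_zero
  obtain ⟨x, y, hxy⟩ := ((hbl.1 u v w).1.exists_apex_ne_zero_iff (hzp u v w)).1 ⟨a, b, c, h⟩
  obtain ⟨u', v', h'⟩ :=
    ((hbl.2 p x y).1.exists_apex_ne_zero_iff (hzq p x y)).1 ⟨u, v, w, hxy⟩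
  exact ⟨x, y, u', v', h'⟩

end Bilinking

theorem eq_ite_sub_ite_of_add_of_abs_le_one {B : Type*} (h : B → B → ℤ)
    (hadd : ∀ u v w, h u v + h v w = h u w) (hbd : ∀ u v, |h u v| ≤ 1) (u v : B) :
    h u v = (if ∃ w, h w v = 1 then 1 else 0) - (if ∃ w, h w u = 1 then 1 else 0) := by
  have hanti : ∀ a b, h b a = - h a b := fun a b => by
    have := hadd a b a; have := hadd a a a; omega
  have hbd' : ∀ a b, -1 ≤ h a b ∧ h a b ≤ 1 := fun a b => abs_le.1 (hbd a b)
  by_cases hv : ∃ w, h w v = 1 <;> by_cases hu : ∃ w, h w u = 1 <;>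
    simp only [hv, hu, if_true, if_false]
  · obtain ⟨a, ha⟩ := hv
    obtain ⟨b, hb⟩ := hu
    have := hadd u a v; have := hadd b u v; have := hbd' u a; have := hbd' b v
    omega
  · obtain ⟨a, ha⟩ := hv
    push Not at hu
    have := hadd u a v; have := hu a; have := hanti u a; have := hbd' u a; have := hbd' u v
    omega
  · obtain ⟨b, hb⟩ := hu
    push Not at hv
    have := hadd v b u; have := hv b; have := hanti v b; have := hanti u v; have := hbd' v b
    have := hbd' u v
    omega
  · push Not at hu hv
    have := hv u; have := hu v; have := hanti u v; have := hbd' u v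
    omega

section Threshold

variable {A B : Type*} {ℓ : ℕ}

section ChainRank

variable (𝒞 : Finset (Set B))

noncomputable def chainRank (C : Set B) : ℕ := #{D ∈ 𝒞 | D ⊂ C}

noncomputable def chainDepth (u : B) : ℕ := #{D ∈ 𝒞 | u ∉ D}

variable {𝒞}

theorem chainRank_mono {C D : Set B} (h : C ⊆ D) : chainRank 𝒞 C ≤ chainRank 𝒞 D :=
  card_le_card (monotone_filter_right _ fun _ _ hE => hE.trans_subset h)

theorem chainRank_lt_card {C : Set B} (hC : C ∈ 𝒞) : chainRank 𝒞 C < #𝒞 :=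
  card_lt_card ((ssubset_iff_of_subset (filter_subset _ _)).2 ⟨C, hC, by simp⟩)

theorem chainRank_lt_of_ssubset {C D : Set B} (hC : C ∈ 𝒞) (h : C ⊂ D) :
    chainRank 𝒞 C < chainRank 𝒞 D :=
  card_lt_card ((ssubset_iff_of_subset (monotone_filter_right _ fun _ _ hE => hE.trans h)).2
    ⟨C, by simp [hC, h], by simp⟩)

theorem chainDepth_le_card (u : B) : chainDepth 𝒞 u ≤ #𝒞 :=
  card_le_card (filter_subset _ _)

theorem mem_iff_chainDepth_le_chainRank (h𝒞 : IsChain (· ⊆ ·) (𝒞 : Set (Set B))) {C : Set B}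
    (hC : C ∈ 𝒞) (u : B) :
    u ∈ C ↔ chainDepth 𝒞 u ≤ chainRank 𝒞 C := by
  constructor
  · refine fun hu => card_le_card fun D hD => ?_
    simp only [mem_filter] at hD ⊢
    have hDC : D ⊆ C := (h𝒞.total hD.1 hC).resolve_right fun h => hD.2 (h hu)
    exact ⟨hD.1, hDC.ssubset_of_ne (by rintro rfl; exact hD.2 hu)⟩
  · intro hle
    by_contra hu
    refine (card_lt_card ((ssubset_iff_of_subset ?_).2 ⟨C, by simp [hC, hu], by simp⟩)).not_ge
      hle
    exact monotone_filter_right _ fun D _ hD huD => hu (hD.subset huD)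

theorem image_chainRank (h𝒞 : IsChain (· ⊆ ·) (𝒞 : Set (Set B))) :
    𝒞.image (chainRank 𝒞) = range #𝒞 := by
  refine eq_of_subset_of_card_le (fun i hi => ?_) ?_
  · obtain ⟨C, hC, rfl⟩ := mem_image.1 hi
    exact mem_range.2 (chainRank_lt_card hC)
  · rw [card_range, card_image_of_injOn]
    intro C hC D hD hCD
    by_contra hne
    rcases h𝒞.total hC hD with h | h
    · exact (chainRank_lt_of_ssubset hC (h.ssubset_of_ne hne)).ne hCD
    · exact (chainRank_lt_of_ssubset hD (h.ssubset_of_ne (Ne.symm hne))).ne' hCD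

theorem exists_chainDepth_eq (h𝒞 : IsChain (· ⊆ ·) (𝒞 : Set (Set B))) (htop : Set.univ ∉ 𝒞)
    {i : ℕ} (hi : i < #𝒞) :
    ∃ u, chainDepth 𝒞 u = i + 1 := by
  have hrank : ∀ j < #𝒞, ∃ C ∈ 𝒞, chainRank 𝒞 C = j := fun j hj =>
    mem_image.1 (by rw [image_chainRank h𝒞]; exact mem_range.2 hj)
  obtain ⟨C, hC, rfl⟩ := hrank i hi
  by_cases hlast : chainRank 𝒞 C + 1 < #𝒞
  · obtain ⟨D, hD, hDi⟩ := hrank _ hlast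
    obtain ⟨u, huD, huC⟩ := Set.not_subset.1 fun h : D ⊆ C => by
      have := chainRank_mono (𝒞 := 𝒞) h; omega
    have := (mem_iff_chainDepth_le_chainRank h𝒞 hD u).1 huD
    have := (mem_iff_chainDepth_le_chainRank h𝒞 hC u).not.1 huC
    exact ⟨u, by omega⟩
  · obtain ⟨u, huC⟩ : ∃ u, u ∉ C := by
      by_contra! h
      exact htop (Set.eq_univ_of_forall h ▸ hC)
    have := (mem_iff_chainDepth_le_chainRank h𝒞 hC u).not.1 huC
    have := chainDepth_le_card (𝒞 := 𝒞) u
    exact ⟨u, by omega⟩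

end ChainRank

theorem exists_threshold_of_chain [Fintype A] (S : A → Set B)
    (hchain : ∀ x y, S x ⊆ S y ∨ S y ⊆ S x) (hbot : ∃ x, S x = ∅)
    (htop : ∀ x, S x ≠ Set.univ) :
    ∃ (ℓ : ℕ) (s : A → Fin ℓ) (t : B → Fin ℓ),
      Surjective s ∧ Surjective t ∧ ∀ x u, u ∈ S x ↔ t u < s x := by
  set 𝒞 := univ.image S
  have hS : ∀ x, S x ∈ 𝒞 := fun x => mem_image_of_mem S (mem_univ x)
  have h𝒞 : IsChain (· ⊆ ·) (𝒞 : Set (Set B)) := by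
    rintro _ hC _ hD -
    obtain ⟨x, -, rfl⟩ := mem_image.1 hC
    obtain ⟨y, -, rfl⟩ := mem_image.1 hD
    exact hchain x y
  obtain ⟨x₀, hx₀⟩ := hbot
  have hdepth : ∀ u, 0 < chainDepth 𝒞 u := fun u =>
    card_pos.2 ⟨S x₀, mem_filter.2 ⟨hS x₀, by simp [hx₀]⟩⟩
  refine ⟨#𝒞, fun x => ⟨chainRank 𝒞 (S x), chainRank_lt_card (hS x)⟩,
    fun u => ⟨chainDepth 𝒞 u - 1, by
      have := chainDepth_le_card (𝒞 := 𝒞) u; have := hdepth u; omega⟩,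
    fun i => ?_, fun i => ?_, fun x u => ?_⟩
  · obtain ⟨C, hC, hCi⟩ := mem_image.1 ((image_chainRank h𝒞).symm ▸ mem_range.2 i.2)
    obtain ⟨x, -, rfl⟩ := mem_image.1 hC
    exact ⟨x, Fin.ext hCi⟩
  · obtain ⟨u, hu⟩ := exists_chainDepth_eq h𝒞 (by simpa [𝒞, eq_comm] using htop) i.2
    exact ⟨u, Fin.ext (by simp [hu])⟩
  · rw [mem_iff_chainDepth_le_chainRank h𝒞 (hS x), Fin.lt_def]
    have := hdepth u
    simp only
    omega

noncomputable def thresholdForm (s : A → Fin ℓ) (t : B → Fin ℓ) (x y : A) (u v : B) : ℤ :=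
  ((if t u < s y then 1 else 0) - (if t u < s x then 1 else 0))
    - ((if t v < s y then 1 else 0) - (if t v < s x then 1 else 0))

variable {s : A → Fin ℓ} {t : B → Fin ℓ}

theorem thresholdForm_eq_Ico {x y : A} (h : s x ≤ s y) (u v : B) :
    thresholdForm s t x y u v = (if t u ∈ Ico (s x) (s y) then 1 else 0)
      - (if t v ∈ Ico (s x) (s y) then 1 else 0) := by
  simp only [thresholdForm, mem_Ico]
  split_ifs <;> omega

theorem thresholdForm_eq_Ioc {u v : B} (h : t u ≤ t v) (x y : A) :
    thresholdForm s t x y u v = (if s y ∈ Ioc (t u) (t v) then 1 else 0)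
      - (if s x ∈ Ioc (t u) (t v) then 1 else 0) := by
  simp only [thresholdForm, mem_Ioc]
  split_ifs <;> omega

theorem exists_thresholdForm_ne_zero_iff_left (ht : Surjective t) (x y : A) :
    (∃ u v, thresholdForm s t x y u v ≠ 0) ↔ s x ≠ s y := by
  refine ⟨fun ⟨u, v, h⟩ hxy => h (by simp [thresholdForm, hxy]), fun hxy => ?_⟩
  have := (s x).isLt
  have := (s y).isLt
  -- `t u` lies between `s x` and `s y`, `t v` lies above both
  obtain ⟨u, hu⟩ := ht ⟨min (s x : ℕ) (s y), by omega⟩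
  obtain ⟨v, hv⟩ := ht ⟨ℓ - 1, by omega⟩
  refine ⟨u, v, ?_⟩
  simp only [thresholdForm, hu, hv]
  split_ifs <;> simp_all only [Fin.lt_def, Fin.ext_iff] <;> omega

theorem exists_thresholdForm_ne_zero_iff_right (hs : Surjective s) (u v : B) :
    (∃ x y, thresholdForm s t x y u v ≠ 0) ↔ t u ≠ t v := by
  refine ⟨fun ⟨x, y, h⟩ huv => h (by simp [thresholdForm, huv]), fun huv => ?_⟩
  have := (t u).isLt
  have := (t v).isLt
  -- `s x` lies between `t u` and `t v`, `s y` lies below both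
  obtain ⟨x, hx⟩ := hs ⟨min (t u : ℕ) (t v) + 1, by omega⟩
  obtain ⟨y, hy⟩ := hs ⟨0, by omega⟩
  refine ⟨x, y, ?_⟩
  simp only [thresholdForm, hx, hy]
  split_ifs <;> simp_all only [Fin.lt_def, Fin.ext_iff] <;> omega

theorem exists_thresholdForm_eq [Fintype A] (g : A → A → B → B → ℤ)
    (hadd₁ : ∀ x y z u v, g x y u v + g y z u v = g x z u v)
    (hadd₂ : ∀ x y u v w, g x y u v + g x y v w = g x y u w)
    (hbd : ∀ x y u v, |g x y u v| ≤ 1) (hnz : ∃ x y u v, g x y u v ≠ 0) :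
    ∃ ℓ, 2 ≤ ℓ ∧ ∃ (s : A → Fin ℓ) (t : B → Fin ℓ),
      Surjective s ∧ Surjective t ∧ g = thresholdForm s t := by
  obtain ⟨x₀, y₀, u₀, v₀, hne⟩ := hnz
  set S : A → Set B := fun x => {v | ∃ w, g x x₀ w v = 1}
  have hcut : ∀ x u v,
      g x x₀ u v = (if v ∈ S x then 1 else 0) - (if u ∈ S x then 1 else 0) :=
    fun x => eq_ite_sub_ite_of_add_of_abs_le_one (g x x₀) (hadd₂ x x₀) (hbd x x₀)
  have hform : ∀ x y u v,
      g x y u v = ((if u ∈ S y then 1 else 0) - (if u ∈ S x then 1 else 0))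
      - ((if v ∈ S y then 1 else 0) - (if v ∈ S x then 1 else 0)) := fun x y u v => by
    have := hadd₁ x x₀ y u v
    have := hadd₁ x₀ y x₀ u v
    have := hadd₁ x₀ x₀ x₀ u v
    linarith [hcut x u v, hcut y u v]
  -- `a ∈ S x \ S y` and `b ∈ S y \ S x` would give `g x y a b = -2`
  have hchain : ∀ x y, S x ⊆ S y ∨ S y ⊆ S x := by
    by_contra! h
    obtain ⟨x, y, hxy, hyx⟩ := h
    obtain ⟨a, hax, hay⟩ := Set.not_subset.1 hxy
    obtain ⟨b, hby, hbx⟩ := Set.not_subset.1 hyx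
    have := hbd x y a b
    simp [hform, hax, hay, hbx, hby] at this
  have hbot : S x₀ = ∅ := Set.eq_empty_iff_forall_notMem.2 fun v ⟨w, hw⟩ => by
    have := hadd₁ x₀ x₀ x₀ w v; omega
  have htop : ∀ x, S x ≠ Set.univ := fun x hx => by
    obtain ⟨w, hw⟩ : v₀ ∈ S x := hx ▸ Set.mem_univ v₀
    have := hcut x w v₀
    simp [hx] at this
    omega
  obtain ⟨ℓ, s, t, hs, ht, hst⟩ := exists_threshold_of_chain S hchain ⟨x₀, hbot⟩ htop
  have hg : g = thresholdForm s t := by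
    funext x y u v
    simp only [hform, hst, thresholdForm]
  refine ⟨ℓ, ?_, s, t, hs, ht, hg⟩
  by_contra! hℓ
  have : s x₀ = s y₀ := Fin.ext (by have := (s x₀).isLt; have := (s y₀).isLt; omega)
  exact hne (by simp [hg, thresholdForm, this])

end Threshold

section LiftedFiber

variable {α ι : Type*} {P : α → Prop} (f : Subtype P → ι)

def liftedFiber (i : ι) : Set α := Subtype.val '' (f ⁻¹' {i})

theorem liftedFiber_nonempty {f : Subtype P → ι} (hf : Surjective f) (i : ι) :
    (liftedFiber f i).Nonempty :=
  let ⟨a, ha⟩ := hf i; ⟨a, a, ha, rfl⟩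

theorem disjoint_liftedFiber {i j : ι} (h : i ≠ j) :
    Disjoint (liftedFiber f i) (liftedFiber f j) :=
  (Set.disjoint_image_iff Subtype.val_injective).2 ((Set.disjoint_singleton.2 h).preimage f)

theorem iUnion_liftedFiber : ⋃ i, liftedFiber f i = {a | P a} := by
  ext a; simp [liftedFiber]

theorem mem_biUnion_liftedFiber {a : α} (ha : P a) (T : Finset ι) :
    a ∈ ⋃ i ∈ T, liftedFiber f i ↔ f ⟨a, ha⟩ ∈ T := by
  simp [liftedFiber, ha]

theorem exists_mem_liftedFiber_iff {a b : α} (ha : P a) (hb : P b) :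
    (∃ i, a ∈ liftedFiber f i ∧ b ∈ liftedFiber f i) ↔ f ⟨a, ha⟩ = f ⟨b, hb⟩ := by
  simp [liftedFiber, ha, hb, eq_comm]

end LiftedFiber

theorem starEdge_insert_compl_right {V : Type*} {q a b : V} (O : Set V) (ha : a ≠ q)
    (hb : b ≠ q) :
    starEdge O (insert q O)ᶜ a b = (if a ∈ O then 1 else 0) - (if b ∈ O then 1 else 0) := by
  simp only [starEdge, Set.mem_compl_iff, Set.mem_insert_iff, ha, hb, false_or]
  split_ifs <;> simp_all

theorem starEdge_insert_compl_left {V : Type*} {p a b : V} (J : Set V) (ha : a ≠ p)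
    (hb : b ≠ p) :
    starEdge (insert p J)ᶜ J a b = (if b ∈ J then 1 else 0) - (if a ∈ J then 1 else 0) := by
  simp only [starEdge, Set.mem_compl_iff, Set.mem_insert_iff, ha, hb, false_or]
  split_ifs <;> simp_all

theorem main_common_vertex_case_general {V : Type*} {W : Type*} [Fintype V] [Fintype W]
    (lam : V → V → V → W → W → W → ℤ)
    (hbl : IsBilinking lam) (hwl : WeaklyLinked lam)
    (p : V) (q : W)
    (hp : ∀ a b c : V, p ∉ ({a, b, c} : Set V) →
        ∀ D : List W, IsCycle D → cycleVal (lam a b c) D = 0)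
    (hq : ∀ u v w : W, q ∉ ({u, v, w} : Set W) →
        ∀ C : List V, IsCycle C →
          cycleVal (fun a b c => lam a b c u v w) C = 0) :
    ∃ ℓ : ℕ, 2 ≤ ℓ ∧ ℓ ≤ min (Fintype.card V) (Fintype.card W) - 1 ∧
    ∃ (X : Fin ℓ → Set V) (Y : Fin ℓ → Set W),
      -- X is a partition of V − {p}
      (∀ i, (X i).Nonempty) ∧ (∀ i j, i ≠ j → Disjoint (X i) (X j)) ∧
      (⋃ i, X i) = ({p} : Set V)ᶜ ∧
      -- Y is a partition of W − {q}
      (∀ i, (Y i).Nonempty) ∧ (∀ i j, i ≠ j → Disjoint (Y i) (Y j)) ∧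
      (⋃ i, Y i) = ({q} : Set W)ᶜ ∧
      -- (i) a triangle (p,x,y) links W iff x and y lie in different parts
      (∀ x y : V, x ≠ p → y ≠ p → x ≠ y →
        ((∃ D : List W, IsCycle D ∧ cycleVal (lam p x y) D ≠ 0) ↔
          ¬ ∃ i, x ∈ X i ∧ y ∈ X i)) ∧
      -- (ii) a triangle (q,u,v) links V iff u and v lie in different parts
      (∀ u v : W, u ≠ q → v ≠ q → u ≠ v →
        ((∃ C : List V, IsCycle C ∧
            cycleVal (fun a b c => lam a b c q u v) C ≠ 0) ↔
          ¬ ∃ i, u ∈ Y i ∧ v ∈ Y i)) ∧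
      -- (iii) the star linked by (p, x_j, x_k) for j < k
      (∀ j k : Fin ℓ, j < k → ∀ xj ∈ X j, ∀ xk ∈ X k,
        lam p xj xk =
          starFun q (⋃ i ∈ Finset.Ico j k, Y i)
            ((insert q (⋃ i ∈ Finset.Ico j k, Y i))ᶜ)) ∧
      -- (iv) the star linked by (q, y_j, y_k) for j < k
      (∀ j k : Fin ℓ, j < k → ∀ yj ∈ Y j, ∀ yk ∈ Y k,
        (fun a b c => lam a b c q yj yk) =
          starFun p ((insert p (⋃ i ∈ Finset.Ioc j k, X i))ᶜ)
            (⋃ i ∈ Finset.Ioc j k, X i)) := by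
  have hzp := hbl.vanishesAwayFrom_left hp
  have hzq := hbl.vanishesAwayFrom_right hq
  obtain ⟨ℓ, hℓ, s, t, hs, ht, hg⟩ := exists_thresholdForm_eq (apexForm lam p q)
    (apexForm_add_left hbl hzp) (apexForm_add_right hbl hzq) (apexForm_abs_le_one hbl hwl)
    (apexForm_exists_ne_zero hbl hwl hzp hzq)
  have hsV := Fintype.card_le_of_surjective s hs
  have htW := Fintype.card_le_of_surjective t ht
  rw [Fintype.card_fin, Fintype.card_subtype_compl, Fintype.card_subtype_eq] at hsV htW
  refine ⟨ℓ, hℓ, by omega, liftedFiber s, liftedFiber t, liftedFiber_nonempty hs,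
    fun _ _ => disjoint_liftedFiber s, iUnion_liftedFiber s, liftedFiber_nonempty ht,
    fun _ _ => disjoint_liftedFiber t, iUnion_liftedFiber t, ?_, ?_, ?_, ?_⟩
  · intro x y hx hy _
    rw [(hbl.2 p x y).1.exists_cycleVal_ne_zero_iff_apex (hzq p x y),
      exists_mem_liftedFiber_iff s hx hy, ← ne_eq, ← exists_thresholdForm_ne_zero_iff_left ht,
      ← hg]
    rfl
  · intro u v hu hv _
    rw [(hbl.1 q u v).1.exists_cycleVal_ne_zero_iff_apex (hzp q u v),
      exists_mem_liftedFiber_iff t hu hv, ← ne_eq, ← exists_thresholdForm_ne_zero_iff_right hs,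
      ← hg]
    rfl
  · rintro j k hjk _ ⟨x, rfl, rfl⟩ _ ⟨y, rfl, rfl⟩
    refine (hbl.2 p x y).1.eq_starFun (hzq p x y) (by simp [liftedFiber]) (by simp)
      fun a b ha hb => ?_
    rw [starEdge_insert_compl_right _ ha hb, 
      show lam p x y q a b = apexForm lam p q x y ⟨a, ha⟩ ⟨b, hb⟩ from rfl, hg,
      thresholdForm_eq_Ico hjk.le]
    simp only [mem_biUnion_liftedFiber t ha, mem_biUnion_liftedFiber t hb]
  · rintro j k hjk _ ⟨u, rfl, rfl⟩ _ ⟨v, rfl, rfl⟩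
    refine (hbl.1 q u v).1.eq_starFun (hzp q u v) (by simp) (by simp [liftedFiber])
      fun a b ha hb => ?_
    rw [starEdge_insert_compl_left _ ha hb, 
      show lam p a b q u v = apexForm lam p q ⟨a, ha⟩ ⟨b, hb⟩ u v from rfl, hg,
      thresholdForm_eq_Ioc hjk.le]
    simp only [mem_biUnion_liftedFiber s ha, mem_biUnion_liftedFiber s hb]

/-- main theorem, common-vertex case. -/
theorem main_common_vertex_case {V : Type*} {W : Type*} [Fintype V] [Fintype W]
    (hV : 5 ≤ Fintype.card V) (hW : 5 ≤ Fintype.card W)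
    (lam : V → V → V → W → W → W → ℤ)
    (hbl : IsBilinking lam) (hwl : WeaklyLinked lam)
    (p : V) (q : W)
    (hp : ∀ a b c : V, p ∉ ({a, b, c} : Set V) →
        ∀ D : List W, IsCycle D → cycleVal (lam a b c) D = 0)
    (hq : ∀ u v w : W, q ∉ ({u, v, w} : Set W) →
        ∀ C : List V, IsCycle C →
          cycleVal (fun a b c => lam a b c u v w) C = 0) :
    ∃ ℓ : ℕ, 2 ≤ ℓ ∧ ℓ ≤ min (Fintype.card V) (Fintype.card W) - 1 ∧
    ∃ (X : Fin ℓ → Set V) (Y : Fin ℓ → Set W),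
      -- X is a partition of V − {p}
      (∀ i, (X i).Nonempty) ∧ (∀ i j, i ≠ j → Disjoint (X i) (X j)) ∧
      (⋃ i, X i) = ({p} : Set V)ᶜ ∧
      -- Y is a partition of W − {q}
      (∀ i, (Y i).Nonempty) ∧ (∀ i j, i ≠ j → Disjoint (Y i) (Y j)) ∧
      (⋃ i, Y i) = ({q} : Set W)ᶜ ∧
      -- (i) a triangle (p,x,y) links W iff x and y lie in different parts
      (∀ x y : V, x ≠ p → y ≠ p → x ≠ y →
        ((∃ D : List W, IsCycle D ∧ cycleVal (lam p x y) D ≠ 0) ↔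
          ¬ ∃ i, x ∈ X i ∧ y ∈ X i)) ∧
      -- (ii) a triangle (q,u,v) links V iff u and v lie in different parts
      (∀ u v : W, u ≠ q → v ≠ q → u ≠ v →
        ((∃ C : List V, IsCycle C ∧
            cycleVal (fun a b c => lam a b c q u v) C ≠ 0) ↔
          ¬ ∃ i, u ∈ Y i ∧ v ∈ Y i)) ∧
      -- (iii) the star linked by (p, x_j, x_k) for j < k
      (∀ j k : Fin ℓ, j < k → ∀ xj ∈ X j, ∀ xk ∈ X k,
        lam p xj xk =
          starFun q (⋃ i ∈ Finset.Ico j k, Y i)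
            ((insert q (⋃ i ∈ Finset.Ico j k, Y i))ᶜ)) ∧
      -- (iv) the star linked by (q, y_j, y_k) for j < k
      (∀ j k : Fin ℓ, j < k → ∀ yj ∈ Y j, ∀ yk ∈ Y k,
        (fun a b c => lam a b c q yj yk) =
          starFun p ((insert p (⋃ i ∈ Finset.Ioc j k, X i))ᶜ)
            (⋃ i ∈ Finset.Ioc j k, X i)) :=
  main_common_vertex_case_general lam hbl hwl p q hp hq
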